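/- For 0 < δ_ξ ≤ 1, there is a constant c > 0 independent of δ_ξ and δ_α such that ‖G_{δ_ξ,δ_α} − G_{δ_ξ}‖ ≤ c · δ_α/δ_ξ, where the norm is the operator norm L²(Ω) → L²(Ω'); the constant c remains bounded for R bounded and R_E bounded away from 1. -/

import Mathlib

open MeasureTheory Real Set Filter

noncomputable section

/-- The unit direction vector `θ(φ) = (cos φ, sin φ)`. -/
def dirv (φ : ℝ) : ℝ × ℝ := (Real.cos φ, Real.sin φ)

/-- The perpendicular direction `θ(φ)^⊥ = (−sin φ, cos φ)`. -/
def dirp (φ : ℝ) : ℝ × ℝ := (-Real.sin φ, Real.cos φ)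

/-- Euclidean inner product on `ℝ²`. -/
def dot2 (x y : ℝ × ℝ) : ℝ := x.1 * y.1 + x.2 * y.2

/-- The open unit disk `Ω = B(0,1) ⊂ ℝ²`. -/
def unitDisk : Set (ℝ × ℝ) := {x : ℝ × ℝ | x.1 ^ 2 + x.2 ^ 2 < 1}

/-- The Radon transform `[R f](s,φ) = ∫ f(s θ(φ) + t θ(φ)^⊥) dt`. -/
def Radon (f : ℝ × ℝ → ℝ) (s φ : ℝ) : ℝ := ∫ t : ℝ, f (s • dirv φ + t • dirp φ)

/-- The backprojection `[R* g](x) = ∫_{S¹} g(x·θ(φ), φ) dφ`. -/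
def Backproj (g : ℝ → ℝ → ℝ) (x : ℝ × ℝ) : ℝ := ∫ φ in Ioc (-π) π, g (dot2 x (dirv φ)) φ

/-- `L²` norm of an image on the plane (for images supported in the unit disk,
this is the `L²(Ω)` norm). -/
def nImg (f : ℝ × ℝ → ℝ) : ℝ := (∫ x : ℝ × ℝ, f x ^ 2) ^ (1/2 : ℝ)

/-- `L²(Ω)` norm of an image restricted to the unit disk. -/
def nImgD (f : ℝ × ℝ → ℝ) : ℝ := (∫ x in unitDisk, f x ^ 2) ^ (1/2 : ℝ)

/-- `L²(ℝ × S¹)` norm of a sinogram. -/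
def nSino (g : ℝ → ℝ → ℝ) : ℝ := (∫ φ in Ioc (-π) π, ∫ s : ℝ, g s φ ^ 2) ^ (1/2 : ℝ)

/-- `L²(Ω')` norm, `Ω' = (−1,1) × S¹`. -/
def nSinoD (g : ℝ → ℝ → ℝ) : ℝ :=
  (∫ φ in Ioc (-π) π, ∫ s in Ioo (-1 : ℝ) 1, g s φ ^ 2) ^ (1/2 : ℝ)

/-- `L²` modulus of continuity of a sinogram: offset shift `h`, angular shift `γ`. -/
def modCont (g : ℝ → ℝ → ℝ) (h γ : ℝ) : ℝ :=
  (∫ φ in Ioc (-π) π, ∫ s : ℝ, (g (s + h) (φ + γ) - g s φ) ^ 2) ^ (1/2 : ℝ)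

/-- `sup_{|h| < r} ω_g(h, 0)`. -/
def supMod (g : ℝ → ℝ → ℝ) (r : ℝ) : ℝ :=
  sSup ((fun h => modCont g h 0) '' Ioo (-r) r)

/-- `f` vanishes outside the unit disk. -/
def SuppDisk (f : ℝ × ℝ → ℝ) : Prop := ∀ x, x ∉ unitDisk → f x = 0

/-- `g` vanishes for offsets outside `(−1, 1)`. -/
def SuppSino (g : ℝ → ℝ → ℝ) : Prop := ∀ s φ, s ∉ Ioo (-1 : ℝ) 1 → g s φ = 0

/-- `g` is `2π`-periodic in the angular variable, i.e. a function on `ℝ × S¹`. -/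
def PeriodicSino (g : ℝ → ℝ → ℝ) : Prop := ∀ s φ, g s (φ + 2 * π) = g s φ

/-- `f ∈ L²(ℝ²)`. -/
def L2Img (f : ℝ × ℝ → ℝ) : Prop := MemLp f 2 (volume : Measure (ℝ × ℝ))

/-- `g ∈ L²(ℝ × S¹)`. -/
def L2Sino (g : ℝ → ℝ → ℝ) : Prop :=
  MemLp (fun z : ℝ × ℝ => g z.1 z.2) 2
    ((volume : Measure (ℝ × ℝ)).restrict (univ ×ˢ Ioc (-π) π))

/-- The hat profile `w_δ(t) = max(0, δ − |t|)`. -/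
def hatw (δ t : ℝ) : ℝ := max 0 (δ - |t|)

/-- Detector centers `s_p = δ_s (p − (P+1)/2)`. -/
def sCen (δs : ℝ) (P p : ℕ) : ℝ := δs * ((p : ℝ) - ((P : ℝ) + 1) / 2)

/-- Detector cells `S_p = s_p + [−δ_s/2, δ_s/2)`. -/
def sCell (δs : ℝ) (P p : ℕ) : Set ℝ := Ico (sCen δs P p - δs / 2) (sCen δs P p + δs / 2)

/-- The detector cells cover `(−1, 1)`. -/
def CoversI (δs : ℝ) (P : ℕ) : Prop := Ioo (-1 : ℝ) 1 ⊆ ⋃ p ∈ Finset.Icc 1 P, sCell δs P p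

/-- Offset-discretized Radon transform `R_{δ_s}`. -/
def RadonS (δs : ℝ) (P : ℕ) (f : ℝ × ℝ → ℝ) (s φ : ℝ) : ℝ :=
  (δs ^ 2)⁻¹ * ∑ p ∈ Finset.Icc 1 P,
    Set.indicator (sCell δs P p) (fun _ => (1 : ℝ)) s *
      ∫ t : ℝ, hatw δs (t - sCen δs P p) * Radon f t φ

/-- The adjoint of `R_{δ_s}`. -/
def RadonSStar (δs : ℝ) (P : ℕ) (g : ℝ → ℝ → ℝ) (x : ℝ × ℝ) : ℝ :=
  (δs ^ 2)⁻¹ * ∑ p ∈ Finset.Icc 1 P,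
    ∫ φ in Ioc (-π) π,
      hatw δs (dot2 x (dirv φ) - sCen δs P p) * ∫ s in sCell δs P p, g s φ

/-- A valid full angular grid `φ_1 < … < φ_Q` in `[−π, π)` with the wrap-around
conventions `φ_0 = φ_Q − 2π` and `φ_{Q+1} = φ_1 + 2π`. -/
structure AngGrid (Q : ℕ) (φs : ℕ → ℝ) : Prop where
  one_le : 1 ≤ Q
  mono : ∀ q, 1 ≤ q → q < Q → φs q < φs (q + 1)
  mem : ∀ q, 1 ≤ q → q ≤ Q → φs q ∈ Ico (-π) π
  wrap0 : φs 0 = φs Q - 2 * π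
  wrapQ : φs (Q + 1) = φs 1 + 2 * π

/-- `δφ` bounds all angular gaps of the grid (it holds for `δφ` the maximal gap). -/
def GapLe (Q : ℕ) (φs : ℕ → ℝ) (δφ : ℝ) : Prop :=
  ∀ q, 1 ≤ q → q ≤ Q → φs (q + 1) - φs q ≤ δφ

/-- The angular cell `Θ_q`, taken modulo `2π`. -/
def angCell (φs : ℕ → ℝ) (q : ℕ) : Set ℝ :=
  {φ : ℝ | ∃ k : ℤ, φ + 2 * π * (k : ℝ) ∈
    Ico ((φs (q - 1) + φs q) / 2) ((φs q + φs (q + 1)) / 2)}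

/-- Offset- and angle-discretized Radon transform `R_{δ_s, δ_φ}`. -/
def RadonSA (δs : ℝ) (P Q : ℕ) (φs : ℕ → ℝ) (f : ℝ × ℝ → ℝ) (s φ : ℝ) : ℝ :=
  (δs ^ 2)⁻¹ * ∑ q ∈ Finset.Icc 1 Q, ∑ p ∈ Finset.Icc 1 P,
    Set.indicator (sCell δs P p) (fun _ => (1 : ℝ)) s *
    Set.indicator (angCell φs q) (fun _ => (1 : ℝ)) φ *
    ∫ x in unitDisk, hatw δs (dot2 x (dirv (φs q)) - sCen δs P p) * f x

/-- Pixel centers `x_{ij}`. -/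
def pixCen (δx : ℝ) (N M i j : ℕ) : ℝ × ℝ :=
  (δx * ((i : ℝ) - ((N : ℝ) + 1) / 2), δx * ((j : ℝ) - ((M : ℝ) + 1) / 2))

/-- Pixels `X_{ij} = x_{ij} + [−δ_x/2, δ_x/2)²`. -/
def pixCell (δx : ℝ) (N M i j : ℕ) : Set (ℝ × ℝ) :=
  Ico ((pixCen δx N M i j).1 - δx / 2) ((pixCen δx N M i j).1 + δx / 2) ×ˢ
    Ico ((pixCen δx N M i j).2 - δx / 2) ((pixCen δx N M i j).2 + δx / 2)

/-- The pixels cover the unit disk. -/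
def CoversDisk (δx : ℝ) (N M : ℕ) : Prop :=
  unitDisk ⊆ ⋃ i ∈ Finset.Icc 1 N, ⋃ j ∈ Finset.Icc 1 M, pixCell δx N M i j

/-- The fully discrete (pixel-driven) Radon transform `R^{δ_x}_{δ_s, δ_φ}`. -/
def RadonFull (δs : ℝ) (P Q : ℕ) (φs : ℕ → ℝ) (δx : ℝ) (N M : ℕ)
    (f : ℝ × ℝ → ℝ) (s φ : ℝ) : ℝ :=
  (δs ^ 2)⁻¹ * ∑ q ∈ Finset.Icc 1 Q, ∑ p ∈ Finset.Icc 1 P,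
    Set.indicator (sCell δs P p) (fun _ => (1 : ℝ)) s *
    Set.indicator (angCell φs q) (fun _ => (1 : ℝ)) φ *
    ∑ i ∈ Finset.Icc 1 N, ∑ j ∈ Finset.Icc 1 M,
      hatw δs (dot2 (pixCen δx N M i j) (dirv (φs q)) - sCen δs P p) *
        ∫ x in pixCell δx N M i j, f x

/-- The adjoint of the fully discrete Radon transform (pixel-driven backprojection). -/
def RadonFullStar (δs : ℝ) (P Q : ℕ) (φs : ℕ → ℝ) (δx : ℝ) (N M : ℕ)
    (g : ℝ → ℝ → ℝ) (x : ℝ × ℝ) : ℝ :=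
  ∑ i ∈ Finset.Icc 1 N, ∑ j ∈ Finset.Icc 1 M,
    Set.indicator (pixCell δx N M i j) (fun _ => (1 : ℝ)) x *
    ((δs ^ 2)⁻¹ * ∑ q ∈ Finset.Icc 1 Q, ∑ p ∈ Finset.Icc 1 P,
      hatw δs (dot2 (pixCen δx N M i j) (dirv (φs q)) - sCen δs P p) *
        ∫ φ in Ico ((φs (q - 1) + φs q) / 2) ((φs q + φs (q + 1)) / 2),
          ∫ s in sCell δs P p, g s φ)

/- ---------- sparse / limited angle ---------- -/

/-- Limited-angle angular grid on `A = (φ_1, φ_Q)` with `φ_0 = φ_1`, `φ_{Q+1} = φ_Q`. -/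
structure AngGridA (Q : ℕ) (φs : ℕ → ℝ) : Prop where
  two_le : 2 ≤ Q
  mono : ∀ q, 1 ≤ q → q < Q → φs q < φs (q + 1)
  mem : ∀ q, 1 ≤ q → q ≤ Q → φs q ∈ Ico (-π) π
  wrap0 : φs 0 = φs 1
  wrapQ : φs (Q + 1) = φs Q

/-- `L²(Ω'_A)` norm, `Ω'_A = (−1,1) × A` with `A = (a,b)`. -/
def nSinoA (a b : ℝ) (g : ℝ → ℝ → ℝ) : ℝ :=
  (∫ φ in Ioo a b, ∫ s in Ioo (-1 : ℝ) 1, g s φ ^ 2) ^ (1/2 : ℝ)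

/-- Limited-angle backprojection `(R^A)*`. -/
def BackprojA (a b : ℝ) (g : ℝ → ℝ → ℝ) (x : ℝ × ℝ) : ℝ :=
  ∫ φ in Ioo a b, g (dot2 x (dirv φ)) φ

/-- `g ∈ L²((−1,1) × A)` (as a function on `ℝ × A`). -/
def L2SinoA (a b : ℝ) (g : ℝ → ℝ → ℝ) : Prop :=
  MemLp (fun z : ℝ × ℝ => g z.1 z.2) 2
    ((volume : Measure (ℝ × ℝ)).restrict (univ ×ˢ Ioo a b))

/-- limited-angle modulus of continuity `ω_g(h, 0)` on `ℝ × A`. -/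
def modContA (a b : ℝ) (g : ℝ → ℝ → ℝ) (h : ℝ) : ℝ :=
  (∫ φ in Ioo a b, ∫ s : ℝ, (g (s + h) φ - g s φ) ^ 2) ^ (1/2 : ℝ)

/-- Sparse-angle `L²(Ω'_F)` norm (counting measure in the angular direction). -/
def nSinoF (Q : ℕ) (φs : ℕ → ℝ) (g : ℝ → ℝ → ℝ) : ℝ :=
  (∑ q ∈ Finset.Icc 1 Q, ∫ s in Ioo (-1 : ℝ) 1, g s (φs q) ^ 2) ^ (1/2 : ℝ)

/-- Sparse-angle modulus of continuity `ω_g(h, 0)`. -/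
def modContF (Q : ℕ) (φs : ℕ → ℝ) (g : ℝ → ℝ → ℝ) (h : ℝ) : ℝ :=
  (∑ q ∈ Finset.Icc 1 Q, ∫ s : ℝ, (g (s + h) (φs q) - g s (φs q)) ^ 2) ^ (1/2 : ℝ)

/-- Sparse-angle backprojection `(R^F)* g (x) = Σ_q g(x·θ_q, φ_q)`. -/
def BackprojF (Q : ℕ) (φs : ℕ → ℝ) (g : ℝ → ℝ → ℝ) (x : ℝ × ℝ) : ℝ :=
  ∑ q ∈ Finset.Icc 1 Q, g (dot2 x (dirv (φs q))) (φs q)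

/-- The discrete sparse-angle Radon transform at a single angle `θang`. -/
def RadonSparse (δs : ℝ) (P : ℕ) (δx : ℝ) (N M : ℕ) (θang : ℝ)
    (f : ℝ × ℝ → ℝ) (s : ℝ) : ℝ :=
  (δs ^ 2)⁻¹ * ∑ p ∈ Finset.Icc 1 P,
    Set.indicator (sCell δs P p) (fun _ => (1 : ℝ)) s *
    ∑ i ∈ Finset.Icc 1 N, ∑ j ∈ Finset.Icc 1 M,
      hatw δs (dot2 (pixCen δx N M i j) (dirv θang) - sCen δs P p) *
        ∫ x in pixCell δx N M i j, f x

/-- Adjoint of the discrete sparse-angle Radon transform. -/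
def RadonSparseStar (δs : ℝ) (P : ℕ) (δx : ℝ) (N M Q : ℕ) (φs : ℕ → ℝ)
    (g : ℝ → ℝ → ℝ) (x : ℝ × ℝ) : ℝ :=
  ∑ i ∈ Finset.Icc 1 N, ∑ j ∈ Finset.Icc 1 M,
    Set.indicator (pixCell δx N M i j) (fun _ => (1 : ℝ)) x *
    ((δs ^ 2)⁻¹ * ∑ q ∈ Finset.Icc 1 Q, ∑ p ∈ Finset.Icc 1 P,
      hatw δs (dot2 (pixCen δx N M i j) (dirv (φs q)) - sCen δs P p) *
        ∫ s in sCell δs P p, g s (φs q))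

/- ---------- fanbeam ---------- -/

/-- Detector width `W = 2R/√(R_E² − 1)`. -/
def Wfan (RE R : ℝ) : ℝ := 2 * R / Real.sqrt (RE ^ 2 - 1)

/-- The fanbeam transform `F`. -/
def Fanbeam (RE R : ℝ) (f : ℝ × ℝ → ℝ) (ξ α : ℝ) : ℝ :=
  Real.sqrt (ξ ^ 2 + R ^ 2) *
    ∫ t : ℝ, f (t • (ξ • dirv α + R • dirp α) - RE • dirp α)

/-- The unweighted fanbeam transform `G`. -/
def GFan (RE R : ℝ) (f : ℝ × ℝ → ℝ) (ξ α : ℝ) : ℝ :=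
  ∫ t : ℝ, f (t • (ξ • dirv α + R • dirp α) - RE • dirp α)

/-- Fan projection coordinate `ξ(x, α) = x·θ(α) R / (x·θ(α)^⊥ + R_E)`. -/
def fanProj (RE R : ℝ) (x : ℝ × ℝ) (α : ℝ) : ℝ :=
  dot2 x (dirv α) * R / (dot2 x (dirp α) + RE)

/-- Adjoint `G*` of the unweighted fanbeam transform. -/
def GFanStar (RE R : ℝ) (g : ℝ → ℝ → ℝ) (x : ℝ × ℝ) : ℝ :=
  ∫ α in Ioc (-π) π, (dot2 x (dirp α) + RE)⁻¹ * g (fanProj RE R x α) α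

/-- Adjoint `F*` of the fanbeam transform. -/
def FanbeamStar (RE R : ℝ) (g : ℝ → ℝ → ℝ) (x : ℝ × ℝ) : ℝ :=
  ∫ α in Ioc (-π) π,
    Real.sqrt (fanProj RE R x α ^ 2 + R ^ 2) * (dot2 x (dirp α) + RE)⁻¹ *
      g (fanProj RE R x α) α

/-- `L²(Ω')` norm for the fanbeam geometry, `Ω' = (−W/2, W/2) × S¹`. -/
def nSinoW (RE R : ℝ) (g : ℝ → ℝ → ℝ) : ℝ :=
  (∫ α in Ioc (-π) π, ∫ ξ in Ioo (-(Wfan RE R) / 2) (Wfan RE R / 2), g ξ α ^ 2) ^ (1/2 : ℝ)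

/-- `g` vanishes for offsets outside `(−W/2, W/2)`. -/
def SuppSinoW (RE R : ℝ) (g : ℝ → ℝ → ℝ) : Prop :=
  ∀ ξ α, ξ ∉ Ioo (-(Wfan RE R) / 2) (Wfan RE R / 2) → g ξ α = 0

/-- `g ∈ L²((−W/2, W/2) × S¹)`. -/
def L2SinoW (RE R : ℝ) (g : ℝ → ℝ → ℝ) : Prop :=
  MemLp (fun z : ℝ × ℝ => g z.1 z.2) 2
    ((volume : Measure (ℝ × ℝ)).restrict
      (Ioo (-(Wfan RE R) / 2) (Wfan RE R / 2) ×ˢ Ioc (-π) π))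

/-- Offset-discretized unweighted fanbeam transform `G_{δ_ξ}`, `δ_ξ = W/P`. -/
def GFanS (RE R : ℝ) (P : ℕ) (f : ℝ × ℝ → ℝ) (ξ α : ℝ) : ℝ :=
  ((Wfan RE R / P) ^ 2)⁻¹ * ∑ p ∈ Finset.Icc 1 P,
    Set.indicator (sCell (Wfan RE R / P) P p) (fun _ => (1 : ℝ)) ξ *
      ∫ x in unitDisk,
        hatw (Wfan RE R / P) (fanProj RE R x α - sCen (Wfan RE R / P) P p) *
          f x / (dot2 x (dirp α) + RE)

/-- Adjoint of `G_{δ_ξ}`. -/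
def GFanSStar (RE R : ℝ) (P : ℕ) (g : ℝ → ℝ → ℝ) (x : ℝ × ℝ) : ℝ :=
  ((Wfan RE R / P) ^ 2)⁻¹ * ∑ p ∈ Finset.Icc 1 P,
    ∫ α in Ioc (-π) π,
      hatw (Wfan RE R / P) (fanProj RE R x α - sCen (Wfan RE R / P) P p) *
        (dot2 x (dirp α) + RE)⁻¹ *
        ∫ ξ in sCell (Wfan RE R / P) P p, g ξ α

/-- Offset- and angle-discretized `G_{δ_ξ, δ_α}`. -/
def GFanSA (RE R : ℝ) (P Q : ℕ) (αs : ℕ → ℝ) (f : ℝ × ℝ → ℝ) (ξ α : ℝ) : ℝ :=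
  ((Wfan RE R / P) ^ 2)⁻¹ * ∑ p ∈ Finset.Icc 1 P, ∑ q ∈ Finset.Icc 1 Q,
    Set.indicator (sCell (Wfan RE R / P) P p) (fun _ => (1 : ℝ)) ξ *
    Set.indicator (angCell αs q) (fun _ => (1 : ℝ)) α *
      ∫ x in unitDisk,
        hatw (Wfan RE R / P) (fanProj RE R x (αs q) - sCen (Wfan RE R / P) P p) *
          f x / (dot2 x (dirp (αs q)) + RE)

/-- Fully discrete unweighted fanbeam transform `G^{δ_x}_{δ_ξ, δ_α}`. -/
def GFanFull (RE R : ℝ) (P Q : ℕ) (αs : ℕ → ℝ) (δx : ℝ) (N M : ℕ)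
    (f : ℝ × ℝ → ℝ) (ξ α : ℝ) : ℝ :=
  ((Wfan RE R / P) ^ 2)⁻¹ * ∑ p ∈ Finset.Icc 1 P, ∑ q ∈ Finset.Icc 1 Q,
    Set.indicator (sCell (Wfan RE R / P) P p) (fun _ => (1 : ℝ)) ξ *
    Set.indicator (angCell αs q) (fun _ => (1 : ℝ)) α *
    ∑ i ∈ Finset.Icc 1 N, ∑ j ∈ Finset.Icc 1 M,
      hatw (Wfan RE R / P)
          (fanProj RE R (pixCen δx N M i j) (αs q) - sCen (Wfan RE R / P) P p) *
        (dot2 (pixCen δx N M i j) (dirp (αs q)) + RE)⁻¹ *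
        ∫ x in pixCell δx N M i j, f x

/-- Fully discrete pixel-driven fanbeam transform `F^{δ_x}_{δ_ξ, δ_α}`. -/
def FanFull (RE R : ℝ) (P Q : ℕ) (αs : ℕ → ℝ) (δx : ℝ) (N M : ℕ)
    (f : ℝ × ℝ → ℝ) (ξ α : ℝ) : ℝ :=
  ((Wfan RE R / P) ^ 2)⁻¹ * ∑ p ∈ Finset.Icc 1 P, ∑ q ∈ Finset.Icc 1 Q,
    Set.indicator (sCell (Wfan RE R / P) P p) (fun _ => (1 : ℝ)) ξ *
    Set.indicator (angCell αs q) (fun _ => (1 : ℝ)) α *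
    Real.sqrt (sCen (Wfan RE R / P) P p ^ 2 + R ^ 2) *
    ∑ i ∈ Finset.Icc 1 N, ∑ j ∈ Finset.Icc 1 M,
      hatw (Wfan RE R / P)
          (fanProj RE R (pixCen δx N M i j) (αs q) - sCen (Wfan RE R / P) P p) *
        (dot2 (pixCen δx N M i j) (dirp (αs q)) + RE)⁻¹ *
        ∫ x in pixCell δx N M i j, f x

/-- Adjoint of the fully discrete pixel-driven fanbeam transform. -/
def FanFullStar (RE R : ℝ) (P Q : ℕ) (αs : ℕ → ℝ) (δx : ℝ) (N M : ℕ)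
    (g : ℝ → ℝ → ℝ) (x : ℝ × ℝ) : ℝ :=
  ∑ i ∈ Finset.Icc 1 N, ∑ j ∈ Finset.Icc 1 M,
    Set.indicator (pixCell δx N M i j) (fun _ => (1 : ℝ)) x *
    (((Wfan RE R / P) ^ 2)⁻¹ * ∑ q ∈ Finset.Icc 1 Q, ∑ p ∈ Finset.Icc 1 P,
      hatw (Wfan RE R / P)
          (fanProj RE R (pixCen δx N M i j) (αs q) - sCen (Wfan RE R / P) P p) *
        Real.sqrt (sCen (Wfan RE R / P) P p ^ 2 + R ^ 2) *
        (dot2 (pixCen δx N M i j) (dirp (αs q)) + RE)⁻¹ *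
        ∫ α in Ico ((αs (q - 1) + αs q) / 2) ((αs q + αs (q + 1)) / 2),
          ∫ ξ in sCell (Wfan RE R / P) P p, g ξ α)

/-! Fix an angle `α`. Exactly one angular cell contains `α`, and its node `α_q` lies within
`δ_α / 2` of `α` modulo `2π`; so at `(ξ, α)` the difference `(G_{δ_ξ,δ_α} − G_{δ_ξ}) f` is
`δ_ξ⁻²` times the change, between the angles `α` and `α_q`, of the detector integrals
`∫_Ω w_{δ_ξ}(ξ(x, ·) − ξ_p) f(x) / (x·θ^⊥ + R_E) dx`. Their kernel is Lipschitz in the angle, with a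
constant controlled by `R`, `R_E` and `R_E − 1`, and it vanishes off a slab of area `O(δ_ξ)`;
by Cauchy–Schwarz each detector integral therefore moves by `O(|α − α_q| δ_ξ^{1/2})` times the
`L²` norm of `f` on the slab. The slabs of different detectors overlap a bounded number of
times, so summing over `p`, integrating over the detector cells (length `δ_ξ`) and over `α`
gives `‖(G_{δ_ξ,δ_α} − G_{δ_ξ}) f‖² ≤ c² (δ_α / δ_ξ)² ‖f‖²`. -/

open Function

lemma abs_div_sub_div_le {a₁ a₂ D₁ D₂ e M N : ℝ} (he : 0 < e) (hD₁ : e ≤ D₁) (hD₂ : e ≤ D₂)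
    (hM : D₂ ≤ M) (hN : |a₂| ≤ N) :
    |a₁ / D₁ - a₂ / D₂| ≤ (M * |a₁ - a₂| + N * |D₁ - D₂|) / e ^ 2 := by
  have hD₁0 : 0 < D₁ := he.trans_le hD₁
  have hD₂0 : 0 < D₂ := he.trans_le hD₂
  have hnum : |a₁ * D₂ - D₁ * a₂| ≤ M * |a₁ - a₂| + N * |D₁ - D₂| :=
    calc |a₁ * D₂ - D₁ * a₂| = |(a₁ - a₂) * D₂ + a₂ * (D₂ - D₁)| := by ring_nf
      _ ≤ |a₁ - a₂| * D₂ + |a₂| * |D₁ - D₂| := by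
        rw [← abs_of_pos hD₂0, ← abs_mul, abs_sub_comm D₁, ← abs_mul, abs_of_pos hD₂0]
        exact abs_add_le _ _
      _ ≤ M * |a₁ - a₂| + N * |D₁ - D₂| := by
        rw [mul_comm]
        exact add_le_add (mul_le_mul_of_nonneg_right hM (abs_nonneg _))
          (mul_le_mul_of_nonneg_right hN (abs_nonneg _))
  rw [div_sub_div _ _ hD₁0.ne' hD₂0.ne', abs_div, abs_of_pos (mul_pos hD₁0 hD₂0)]
  exact div_le_div₀ ((abs_nonneg _).trans hnum) hnum (by positivity)
    (by rw [sq]; exact mul_le_mul hD₁ hD₂ he.le hD₁0.le)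

lemma card_le_of_abs_sub_le {T : Finset ℕ} {r : ℝ} (hr : 0 ≤ r)
    (h : ∀ a ∈ T, ∀ b ∈ T, |(a : ℝ) - b| ≤ r) : (T.card : ℝ) ≤ r + 1 := by
  rcases T.eq_empty_or_nonempty with rfl | hT
  · simpa using hr.trans (le_add_of_nonneg_right zero_le_one)
  have hsub : T ⊆ Finset.Icc (T.min' hT) (T.min' hT + ⌊r⌋₊) := by
    intro a ha
    have hle := T.min'_le a ha
    have : ((a - T.min' hT : ℕ) : ℝ) ≤ r := by
      rw [Nat.cast_sub hle]
      exact (le_abs_self _).trans (h a ha _ (T.min'_mem hT))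
    have := Nat.le_floor this
    rw [Finset.mem_Icc]
    omega
  have hcard : T.card ≤ ⌊r⌋₊ + 1 :=
    (Finset.card_le_card hsub).trans (by rw [Nat.card_Icc]; omega)
  calc (T.card : ℝ) ≤ (⌊r⌋₊ : ℝ) + 1 := by exact_mod_cast hcard
    _ ≤ r + 1 := by linarith [Nat.floor_le hr]

lemma existsUnique_mem_Ico_of_monotoneOn {α : Type*} [LinearOrder α] {m : ℕ → α} {N : ℕ}
    (hm : MonotoneOn m (Iic N)) {β : α} (hβ : β ∈ Ico (m 0) (m N)) :
    ∃! n, n < N ∧ β ∈ Ico (m n) (m (n + 1)) := by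
  refine existsUnique_of_exists_of_unique ?_ fun n n' ⟨hn, hβn⟩ ⟨hn', hβn'⟩ => ?_
  · induction N with
    | zero => exact absurd hβ (by simp)
    | succ N ih =>
      by_cases h : β < m N
      · obtain ⟨n, hn, hβn⟩ := ih (hm.mono (Iic_subset_Iic.2 N.le_succ)) ⟨hβ.1, h⟩
        exact ⟨n, hn.trans N.lt_succ_self, hβn⟩
      · exact ⟨N, N.lt_succ_self, not_lt.1 h, hβ.2⟩
  · have key : ∀ a b, a < b → b < N → β ∈ Ico (m a) (m (a + 1)) →
        β ∈ Ico (m b) (m (b + 1)) → False := fun a b hab hb ha hb' =>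
      (ha.2.trans_le (hm (mem_Iic.2 (by omega)) (mem_Iic.2 hb.le) hab)).not_ge hb'.1
    rcases lt_trichotomy n n' with h | h | h
    exacts [(key n n' h hn' hβn hβn').elim, h, (key n' n h hn hβn' hβn).elim]

lemma sq_sum_indicator_mul_eq {ι X : Type*} {F : Finset ι} {S : ι → Set X}
    (hS : Pairwise (Disjoint on S)) (b : ι → ℝ) (ξ : X) :
    (∑ i ∈ F, (S i).indicator (fun _ => (1 : ℝ)) ξ * b i) ^ 2
      = ∑ i ∈ F, (S i).indicator (fun _ => b i ^ 2) ξ := by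
  by_cases h : ∃ i ∈ F, ξ ∈ S i
  · obtain ⟨i, hi, hξ⟩ := h
    have hout : ∀ j ≠ i, ξ ∉ S j := fun j hj hξj =>
      Set.disjoint_left.1 (hS hj) hξj hξ
    rw [Finset.sum_eq_single_of_mem i hi fun j _ hj => by simp [hout j hj],
      Finset.sum_eq_single_of_mem i hi fun j _ hj => by simp [hout j hj]]
    simp [hξ]
  · push Not at h
    rw [Finset.sum_eq_zero fun i hi => by simp [h i hi],
      Finset.sum_eq_zero fun i hi => by simp [h i hi]]
    simp

lemma sq_setIntegral_abs_le {X : Type*} [MeasurableSpace X] {μ : Measure X} {s : Set X}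
    (hs : μ s ≠ ⊤) {f : X → ℝ} (hf : MemLp f 2 (μ.restrict s)) :
    (∫ x in s, |f x| ∂μ) ^ 2 ≤ μ.real s * ∫ x in s, f x ^ 2 ∂μ := by
  have : IsFiniteMeasure (μ.restrict s) := isFiniteMeasure_restrict.2 hs
  have hholder := integral_mul_le_Lp_mul_Lq_of_nonneg Real.HolderConjugate.two_two
    (ae_of_all _ fun _ => zero_le_one) (ae_of_all _ fun x => abs_nonneg (f x))
    (by simpa using memLp_const (μ := μ.restrict s) (p := 2) (1 : ℝ))
    (by simpa using hf.norm)
  simp only [one_mul, integral_const, smul_eq_mul, mul_one,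
    measureReal_restrict_apply_univ, one_pow, Real.rpow_two, sq_abs] at hholder
  calc (∫ x in s, |f x| ∂μ) ^ 2
      ≤ (μ.real s ^ (1 / 2 : ℝ) * (∫ x in s, f x ^ 2 ∂μ) ^ (1 / 2 : ℝ)) ^ 2 :=
        pow_le_pow_left₀ (integral_nonneg fun x => abs_nonneg _) hholder 2
    _ = μ.real s * ∫ x in s, f x ^ 2 ∂μ := by
        rw [mul_pow, ← Real.sqrt_eq_rpow, ← Real.sqrt_eq_rpow, Real.sq_sqrt measureReal_nonneg,
          Real.sq_sqrt (integral_nonneg fun x => sq_nonneg _)]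

lemma sum_setIntegral_inter_le {ι X : Type*} [MeasurableSpace X] {μ : Measure X}
    (F : Finset ι) {S : ι → Set X} (hS : ∀ i, MeasurableSet (S i))
    {s : Set X} (hs : MeasurableSet s) {g : X → ℝ} (hg0 : ∀ x, 0 ≤ g x)
    (hg : IntegrableOn g s μ) {N : ℝ}
    (hN : ∀ x ∈ s, ∑ i ∈ F, (S i).indicator 1 x ≤ N) :
    ∑ i ∈ F, ∫ x in S i ∩ s, g x ∂μ ≤ N * ∫ x in s, g x ∂μ := by
  have hpt : ∀ x ∈ s, ∑ i ∈ F, (S i).indicator g x ≤ N * g x := by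
    intro x hx
    have : ∀ i, (S i).indicator g x = (S i).indicator 1 x * g x := fun i => by
      by_cases hi : x ∈ S i <;> simp [hi]
    simp only [this, ← Finset.sum_mul]
    exact mul_le_mul_of_nonneg_right (hN x hx) (hg0 x)
  calc ∑ i ∈ F, ∫ x in S i ∩ s, g x ∂μ = ∫ x in s, ∑ i ∈ F, (S i).indicator g x ∂μ := by
        rw [integral_finsetSum _ fun i _ => hg.indicator (hS i)]
        exact Finset.sum_congr rfl fun i _ => by rw [setIntegral_indicator (hS i), inter_comm]
    _ ≤ ∫ x in s, N * g x ∂μ :=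
        setIntegral_mono_on (integrable_finsetSum _ fun i _ => hg.indicator (hS i))
          (hg.const_mul N) hs hpt
    _ = N * ∫ x in s, g x ∂μ := integral_const_mul _ _

lemma measurableSet_slab (v₁ v₂ c w : ℝ) :
    MeasurableSet {x : ℝ × ℝ | |x.1 * v₁ + x.2 * v₂ - c| ≤ w ∧ |x.2| ≤ 1} :=
  (measurableSet_le (f := fun x : ℝ × ℝ => |x.1 * v₁ + x.2 * v₂ - c|) (by fun_prop)
    measurable_const).inter
    (measurableSet_le (f := fun x : ℝ × ℝ => |x.2|) (by fun_prop) measurable_const)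

lemma volume_slab_inter_abs_snd_le {v₁ : ℝ} (hv : v₁ ≠ 0) (v₂ c w : ℝ) :
    volume {x : ℝ × ℝ | |x.1 * v₁ + x.2 * v₂ - c| ≤ w ∧ |x.2| ≤ 1}
      ≤ ENNReal.ofReal (4 * w / |v₁|) := by
  set S := {x : ℝ × ℝ | |x.1 * v₁ + x.2 * v₂ - c| ≤ w ∧ |x.2| ≤ 1}
  have hS : MeasurableSet S := measurableSet_slab v₁ v₂ c w
  have hsection : ∀ y, volume ((fun x => (x, y)) ⁻¹' S)
      ≤ (Icc (-1 : ℝ) 1).indicator (fun _ => ENNReal.ofReal (2 * (w / |v₁|))) y := by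
    intro y
    by_cases hy : y ∈ Icc (-1 : ℝ) 1
    · rw [indicator_of_mem hy, ← Real.volume_closedBall ((c - y * v₂) / v₁)]
      refine measure_mono fun x hx => ?_
      have : (x - (c - y * v₂) / v₁) * v₁ = x * v₁ + y * v₂ - c := by field_simp; ring
      rw [Metric.mem_closedBall, Real.dist_eq, le_div_iff₀ (abs_pos.2 hv), ← abs_mul, this]
      exact hx.1
    · rw [indicator_of_notMem hy, nonpos_iff_eq_zero, measure_eq_zero_iff_ae_notMem]
      exact ae_of_all _ fun x hx => hy (abs_le.1 hx.2)
  calc volume S = ∫⁻ y, volume ((fun x => (x, y)) ⁻¹' S) := by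
        rw [Measure.volume_eq_prod, Measure.prod_apply_symm hS]
    _ ≤ ∫⁻ y, (Icc (-1 : ℝ) 1).indicator (fun _ => ENNReal.ofReal (2 * (w / |v₁|))) y :=
        lintegral_mono hsection
    _ = ENNReal.ofReal (4 * w / |v₁|) := by
        rw [lintegral_indicator_const measurableSet_Icc, Real.volume_Icc,
          ← ENNReal.ofReal_mul' (by norm_num)]
        ring_nf

lemma volume_slab_inter_abs_fst_le {v₂ : ℝ} (hv : v₂ ≠ 0) (v₁ c w : ℝ) :
    volume {x : ℝ × ℝ | |x.1 * v₁ + x.2 * v₂ - c| ≤ w ∧ |x.1| ≤ 1}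
      ≤ ENNReal.ofReal (4 * w / |v₂|) := by
  have hswap : {x : ℝ × ℝ | |x.1 * v₁ + x.2 * v₂ - c| ≤ w ∧ |x.1| ≤ 1}
      = Prod.swap ⁻¹' {y : ℝ × ℝ | |y.1 * v₂ + y.2 * v₁ - c| ≤ w ∧ |y.2| ≤ 1} := by
    ext x; simp [add_comm]
  rw [hswap, Measure.volume_eq_prod, (Measure.measurePreserving_swap).measure_preimage
    (measurableSet_slab v₂ v₁ c w).nullMeasurableSet, ← Measure.volume_eq_prod]
  exact volume_slab_inter_abs_snd_le hv v₁ c w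

lemma hatw_nonneg (δ t : ℝ) : 0 ≤ hatw δ t := le_max_left _ _

lemma hatw_le (δ t : ℝ) (hδ : 0 ≤ δ) : hatw δ t ≤ δ :=
  max_le hδ (sub_le_self _ (abs_nonneg t))

lemma abs_hatw_sub_hatw_le (δ a b : ℝ) : |hatw δ a - hatw δ b| ≤ |a - b| := by
  simp only [hatw, max_comm (0 : ℝ)]
  refine (abs_max_sub_max_le_abs _ _ _).trans ?_
  rw [sub_sub_sub_cancel_left, abs_sub_comm a]
  exact abs_abs_sub_abs_le_abs_sub b a

lemma abs_lt_of_hatw_ne_zero {δ t : ℝ} (h : hatw δ t ≠ 0) : |t| < δ := by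
  by_contra! ht
  exact h (max_eq_left (by linarith))

lemma dirv_add_pi_div_two (β : ℝ) : dirv (β + π / 2) = dirp β := by
  simp [dirv, dirp, Real.cos_add_pi_div_two, Real.sin_add_pi_div_two]

lemma dirv_add_int_mul_two_pi (β : ℝ) (k : ℤ) : dirv (β + k * (2 * π)) = dirv β := by
  simp [dirv, Real.cos_add_int_mul_two_pi, Real.sin_add_int_mul_two_pi]

lemma dirp_add_int_mul_two_pi (β : ℝ) (k : ℤ) : dirp (β + k * (2 * π)) = dirp β := by
  simp [dirp, Real.cos_add_int_mul_two_pi, Real.sin_add_int_mul_two_pi]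

lemma measurableSet_unitDisk : MeasurableSet unitDisk :=
  measurableSet_lt (by fun_prop) (by fun_prop)

lemma abs_fst_le_one_of_mem_unitDisk {x : ℝ × ℝ} (hx : x ∈ unitDisk) : |x.1| ≤ 1 := by
  have : x.1 ^ 2 + x.2 ^ 2 < 1 := hx
  exact abs_le_one_iff_mul_self_le_one.2 (by nlinarith [sq_nonneg x.2])

lemma abs_snd_le_one_of_mem_unitDisk {x : ℝ × ℝ} (hx : x ∈ unitDisk) : |x.2| ≤ 1 := by
  have : x.1 ^ 2 + x.2 ^ 2 < 1 := hx
  exact abs_le_one_iff_mul_self_le_one.2 (by nlinarith [sq_nonneg x.1])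

lemma volume_unitDisk_lt_top : volume unitDisk < ⊤ := by
  refine (measure_mono fun x hx => ?_).trans_lt
    (measure_closedBall_lt_top (x := (0 : ℝ × ℝ)) (r := 1))
  rw [mem_closedBall_zero_iff, Prod.norm_def, Real.norm_eq_abs, Real.norm_eq_abs]
  exact max_le (abs_fst_le_one_of_mem_unitDisk hx) (abs_snd_le_one_of_mem_unitDisk hx)

instance : IsFiniteMeasure (volume.restrict unitDisk) :=
  isFiniteMeasure_restrict.2 volume_unitDisk_lt_top.ne

lemma abs_dot2_dirv_le_one {x : ℝ × ℝ} (hx : x ∈ unitDisk) (β : ℝ) : |dot2 x (dirv β)| ≤ 1 := by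
  have : x.1 ^ 2 + x.2 ^ 2 < 1 := hx
  refine abs_le_one_iff_mul_self_le_one.2 ?_
  simp only [dot2, dirv]
  nlinarith [Real.sin_sq_add_cos_sq β, sq_nonneg (x.1 * Real.sin β - x.2 * Real.cos β)]

lemma abs_dot2_dirp_le_one {x : ℝ × ℝ} (hx : x ∈ unitDisk) (β : ℝ) : |dot2 x (dirp β)| ≤ 1 := by
  simpa [dirv_add_pi_div_two] using abs_dot2_dirv_le_one hx (β + π / 2)

lemma abs_dot2_dirv_sub_le {x : ℝ × ℝ} (hx : x ∈ unitDisk) (a b : ℝ) :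
    |dot2 x (dirv a) - dot2 x (dirv b)| ≤ 2 * |a - b| := by
  have h₁ := abs_fst_le_one_of_mem_unitDisk hx
  have h₂ := abs_snd_le_one_of_mem_unitDisk hx
  calc |dot2 x (dirv a) - dot2 x (dirv b)|
      = |x.1 * (Real.cos a - Real.cos b) + x.2 * (Real.sin a - Real.sin b)| := by
        simp only [dot2, dirv]; ring_nf
    _ ≤ |x.1| * |Real.cos a - Real.cos b| + |x.2| * |Real.sin a - Real.sin b| := by
        rw [← abs_mul, ← abs_mul]; exact abs_add_le _ _
    _ ≤ 1 * |a - b| + 1 * |a - b| :=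
        add_le_add (mul_le_mul h₁ (Real.abs_cos_sub_cos_le a b) (abs_nonneg _) zero_le_one)
          (mul_le_mul h₂ (Real.abs_sin_sub_sin_le a b) (abs_nonneg _) zero_le_one)
    _ = 2 * |a - b| := by ring

lemma abs_dot2_dirp_sub_le {x : ℝ × ℝ} (hx : x ∈ unitDisk) (a b : ℝ) :
    |dot2 x (dirp a) - dot2 x (dirp b)| ≤ 2 * |a - b| := by
  simpa [dirv_add_pi_div_two] using abs_dot2_dirv_sub_le hx (a + π / 2) (b + π / 2)

lemma le_dot2_dirp_add {x : ℝ × ℝ} (hx : x ∈ unitDisk) (β RE : ℝ) :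
    RE - 1 ≤ dot2 x (dirp β) + RE := by
  linarith [(abs_le.1 (abs_dot2_dirp_le_one hx β)).1]

lemma dot2_dirp_add_le {x : ℝ × ℝ} (hx : x ∈ unitDisk) (β RE : ℝ) :
    dot2 x (dirp β) + RE ≤ RE + 1 := by
  linarith [(abs_le.1 (abs_dot2_dirp_le_one hx β)).2]

lemma Wfan_pos {RE R : ℝ} (hRE : 1 < RE) (hR : 0 < R) : 0 < Wfan RE R :=
  div_pos (by linarith) (Real.sqrt_pos.2 (by nlinarith))

def fanKernel (RE R δ s β : ℝ) (x : ℝ × ℝ) : ℝ :=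
  hatw δ (fanProj RE R x β - s) / (dot2 x (dirp β) + RE)

lemma measurable_fanKernel (RE R δ s β : ℝ) : Measurable (fanKernel RE R δ s β) := by
  unfold fanKernel fanProj hatw dot2
  fun_prop

lemma abs_fanKernel_le {RE R δ : ℝ} (hRE : 1 < RE) (hδ : 0 ≤ δ) (s β : ℝ) {x : ℝ × ℝ}
    (hx : x ∈ unitDisk) : |fanKernel RE R δ s β x| ≤ δ / (RE - 1) := by
  have hD := le_dot2_dirp_add hx β RE
  rw [fanKernel, abs_div, abs_of_nonneg (hatw_nonneg _ _), abs_of_pos (by linarith)]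
  exact div_le_div₀ hδ (hatw_le _ _ hδ) (by linarith) hD

lemma abs_fanProj_sub_le {RE R e : ℝ} (he : 0 < e) (hRE : 1 + e ≤ RE) (hR : 0 ≤ R)
    {x : ℝ × ℝ} (hx : x ∈ unitDisk) (a b : ℝ) :
    |fanProj RE R x a - fanProj RE R x b| ≤ 2 * R * (RE + 2) / e ^ 2 * |a - b| := by
  have hA : |dot2 x (dirv a) * R - dot2 x (dirv b) * R| ≤ R * (2 * |a - b|) := by
    rw [← sub_mul, abs_mul, abs_of_nonneg hR, mul_comm]
    exact mul_le_mul_of_nonneg_left (abs_dot2_dirv_sub_le hx a b) hR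
  have hB : |dot2 x (dirv b) * R| ≤ R := by
    rw [abs_mul, abs_of_nonneg hR]
    exact mul_le_of_le_one_left hR (abs_dot2_dirv_le_one hx b)
  have hD : |(dot2 x (dirp a) + RE) - (dot2 x (dirp b) + RE)| ≤ 2 * |a - b| := by
    rw [add_sub_add_right_eq_sub]; exact abs_dot2_dirp_sub_le hx a b
  refine (abs_div_sub_div_le he (by linarith [le_dot2_dirp_add hx a RE])
    (by linarith [le_dot2_dirp_add hx b RE]) (dot2_dirp_add_le hx b RE) hB).trans ?_
  have : 0 ≤ |a - b| := abs_nonneg _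
  calc ((RE + 1) * |dot2 x (dirv a) * R - dot2 x (dirv b) * R|
        + R * |(dot2 x (dirp a) + RE) - (dot2 x (dirp b) + RE)|) / e ^ 2
      ≤ ((RE + 1) * (R * (2 * |a - b|)) + R * (2 * |a - b|)) / e ^ 2 := by
        gcongr; linarith
    _ = 2 * R * (RE + 2) / e ^ 2 * |a - b| := by ring

lemma abs_fanKernel_sub_le {RE R e δ : ℝ} (he : 0 < e) (hRE : 1 + e ≤ RE) (hR : 0 ≤ R)
    (hδ : 0 ≤ δ) (s : ℝ) {x : ℝ × ℝ} (hx : x ∈ unitDisk) (a b : ℝ) :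
    |fanKernel RE R δ s a x - fanKernel RE R δ s b x|
      ≤ ((RE + 1) * (2 * R * (RE + 2) / e ^ 2) + 2 * δ) / e ^ 2 * |a - b| := by
  have hw : |hatw δ (fanProj RE R x a - s) - hatw δ (fanProj RE R x b - s)|
      ≤ 2 * R * (RE + 2) / e ^ 2 * |a - b| :=
    (abs_hatw_sub_hatw_le _ _ _).trans <| by
      rw [sub_sub_sub_cancel_right]; exact abs_fanProj_sub_le he hRE hR hx a b
  have hB : |hatw δ (fanProj RE R x b - s)| ≤ δ := by
    rw [abs_of_nonneg (hatw_nonneg _ _)]; exact hatw_le _ _ hδ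
  have hD : |(dot2 x (dirp a) + RE) - (dot2 x (dirp b) + RE)| ≤ 2 * |a - b| := by
    rw [add_sub_add_right_eq_sub]; exact abs_dot2_dirp_sub_le hx a b
  refine (abs_div_sub_div_le he (by linarith [le_dot2_dirp_add hx a RE])
    (by linarith [le_dot2_dirp_add hx b RE]) (dot2_dirp_add_le hx b RE) hB).trans ?_
  calc ((RE + 1) * |hatw δ (fanProj RE R x a - s) - hatw δ (fanProj RE R x b - s)|
        + δ * |(dot2 x (dirp a) + RE) - (dot2 x (dirp b) + RE)|) / e ^ 2
      ≤ ((RE + 1) * (2 * R * (RE + 2) / e ^ 2 * |a - b|) + δ * (2 * |a - b|)) / e ^ 2 := by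
        gcongr; linarith
    _ = ((RE + 1) * (2 * R * (RE + 2) / e ^ 2) + 2 * δ) / e ^ 2 * |a - b| := by ring

/-- Clearing the denominator `x·θ(β)^⊥ + R_E ≤ R_E + 1` in `|ξ(x, β) − s| < δ` turns the support
condition of `fanKernel RE R δ s β` into this linear one. -/
def fanStrip (RE R δ s β : ℝ) : Set (ℝ × ℝ) :=
  {x | |dot2 x (dirv β) * R - s * (dot2 x (dirp β) + RE)| ≤ δ * (RE + 1)}

lemma measurableSet_fanStrip (RE R δ s β : ℝ) : MeasurableSet (fanStrip RE R δ s β) := by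
  unfold fanStrip dot2
  exact measurableSet_le (by fun_prop) (by fun_prop)

lemma mem_fanStrip_of_fanKernel_ne_zero {RE R δ s β : ℝ} (hRE : 1 < RE) {x : ℝ × ℝ}
    (hx : x ∈ unitDisk) (h : fanKernel RE R δ s β x ≠ 0) : x ∈ fanStrip RE R δ s β := by
  have hD : 0 < dot2 x (dirp β) + RE := by linarith [le_dot2_dirp_add hx β RE]
  have hw : |fanProj RE R x β - s| < δ := abs_lt_of_hatw_ne_zero (div_ne_zero_iff.1 h).1
  have : dot2 x (dirv β) * R - s * (dot2 x (dirp β) + RE)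
      = (fanProj RE R x β - s) * (dot2 x (dirp β) + RE) := by
    rw [fanProj]; field_simp
  rw [fanStrip, mem_ofPred_eq, this, abs_mul, abs_of_pos hD]
  exact mul_le_mul hw.le (dot2_dirp_add_le hx β RE) hD.le ((abs_nonneg _).trans hw.le)

lemma abs_sub_le_of_mem_fanStrip {RE R e δ s s' β : ℝ} (he : 0 < e) (hRE : 1 + e ≤ RE)
    {x : ℝ × ℝ} (hx : x ∈ unitDisk) (h : x ∈ fanStrip RE R δ s β)
    (h' : x ∈ fanStrip RE R δ s' β) : |s - s'| ≤ 2 * δ * (RE + 1) / e := by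
  have hD : e ≤ dot2 x (dirp β) + RE := by linarith [le_dot2_dirp_add hx β RE]
  have h₁ : |dot2 x (dirv β) * R - s * (dot2 x (dirp β) + RE)| ≤ δ * (RE + 1) := h
  have h₂ : |dot2 x (dirv β) * R - s' * (dot2 x (dirp β) + RE)| ≤ δ * (RE + 1) := h'
  rw [le_div_iff₀ he]
  calc |s - s'| * e ≤ |s - s'| * (dot2 x (dirp β) + RE) := by gcongr
    _ = |(dot2 x (dirv β) * R - s' * (dot2 x (dirp β) + RE))
          - (dot2 x (dirv β) * R - s * (dot2 x (dirp β) + RE))| := by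
        rw [← abs_of_pos (he.trans_le hD), ← abs_mul, abs_of_pos (he.trans_le hD)]
        ring_nf
    _ ≤ 2 * δ * (RE + 1) := by linarith [abs_sub _ _ |>.trans (add_le_add h₂ h₁)]

lemma volume_fanStrip_inter_unitDisk_le {RE R δ : ℝ} (hδ : 0 ≤ δ) (hRE : 1 < RE)
    (hR : RE + 1 ≤ R) (s β : ℝ) :
    volume (fanStrip RE R δ s β ∩ unitDisk) ≤ ENNReal.ofReal (8 * δ) := by
  set v₁ := R * Real.cos β + s * Real.sin β
  set v₂ := R * Real.sin β - s * Real.cos β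
  have hv : R ^ 2 ≤ v₁ ^ 2 + v₂ ^ 2 := by
    nlinarith [Real.sin_sq_add_cos_sq β, sq_nonneg s]
  have hstrip : ∀ x ∈ fanStrip RE R δ s β,
      |x.1 * v₁ + x.2 * v₂ - s * RE| ≤ δ * (RE + 1) := by
    intro x hx
    have : x.1 * v₁ + x.2 * v₂ - s * RE = dot2 x (dirv β) * R - s * (dot2 x (dirp β) + RE) := by
      simp only [v₁, v₂, dot2, dirv, dirp]; ring
    exact this ▸ hx
  have hwidth : ∀ v, R / 2 ≤ |v| → ENNReal.ofReal (4 * (δ * (RE + 1)) / |v|)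
      ≤ ENNReal.ofReal (8 * δ) := by
    intro v hv
    apply ENNReal.ofReal_le_ofReal
    rw [div_le_iff₀ (by linarith)]
    nlinarith [mul_le_mul_of_nonneg_left hR hδ, mul_le_mul_of_nonneg_left hv hδ]
  -- One of `|v₁|`, `|v₂|` is at least `R / 2`: slice the slab along the other coordinate.
  by_cases h₁ : R / 2 ≤ |v₁|
  · refine (measure_mono fun x hx => ?_).trans
      ((volume_slab_inter_abs_snd_le (v₂ := v₂) (c := s * RE) (w := δ * (RE + 1))
        (abs_pos.1 (by linarith))).trans (hwidth v₁ h₁))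
    exact ⟨hstrip x hx.1, abs_snd_le_one_of_mem_unitDisk hx.2⟩
  · have h₂ : R / 2 ≤ |v₂| := by
      by_contra! h₂
      nlinarith [sq_abs v₁, sq_abs v₂, abs_nonneg v₁, abs_nonneg v₂]
    refine (measure_mono fun x hx => ?_).trans
      ((volume_slab_inter_abs_fst_le (v₁ := v₁) (c := s * RE) (w := δ * (RE + 1))
        (abs_pos.1 (by linarith))).trans (hwidth v₂ h₂))
    exact ⟨hstrip x hx.1, abs_fst_le_one_of_mem_unitDisk hx.2⟩

lemma sum_indicator_fanStrip_le {RE R e δ : ℝ} (he : 0 < e) (hRE : 1 + e ≤ RE) (hδ : 0 < δ)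
    (P : ℕ) (β : ℝ) {x : ℝ × ℝ} (hx : x ∈ unitDisk) :
    ∑ p ∈ Finset.Icc 1 P, (fanStrip RE R δ (sCen δ P p) β).indicator 1 x
      ≤ 2 * (RE + 1) / e + 1 := by
  classical
  simp only [Set.indicator_apply, Pi.one_apply, Finset.sum_boole]
  refine card_le_of_abs_sub_le (div_nonneg (by linarith) he.le) fun p hp p' hp' => ?_
  have h := abs_sub_le_of_mem_fanStrip he hRE hx (Finset.mem_filter.1 hp).2
    (Finset.mem_filter.1 hp').2
  rw [sCen, sCen, ← mul_sub, sub_sub_sub_cancel_right, abs_mul, abs_of_pos hδ] at h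
  exact le_of_mul_le_mul_left (h.trans_eq (by ring)) hδ

lemma sum_sq_setIntegral_fanStrip_le {RE R e δ : ℝ} (he : 0 < e) (hRE : 1 + e ≤ RE)
    (hR : RE + 1 ≤ R) (hδ : 0 < δ) (P : ℕ) (β : ℝ) {f : ℝ × ℝ → ℝ}
    (hf : MemLp f 2 (volume.restrict unitDisk)) :
    ∑ p ∈ Finset.Icc 1 P, (∫ x in fanStrip RE R δ (sCen δ P p) β ∩ unitDisk, |f x|) ^ 2
      ≤ 8 * δ * (2 * (RE + 1) / e + 1) * ∫ x in unitDisk, f x ^ 2 := by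
  have hRE' : 1 < RE := by linarith
  have hstrip : ∀ p ∈ Finset.Icc 1 P,
      (∫ x in fanStrip RE R δ (sCen δ P p) β ∩ unitDisk, |f x|) ^ 2
        ≤ 8 * δ * ∫ x in fanStrip RE R δ (sCen δ P p) β ∩ unitDisk, f x ^ 2 := by
    intro p _
    have hvol := volume_fanStrip_inter_unitDisk_le hδ.le hRE' hR (sCen δ P p) β
    have hfS := hf.restrict (fanStrip RE R δ (sCen δ P p) β)
    rw [Measure.restrict_restrict (measurableSet_fanStrip _ _ _ _ _)] at hfS
    refine (sq_setIntegral_abs_le (ne_top_of_le_ne_top ENNReal.ofReal_ne_top hvol) hfS).trans ?_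
    exact mul_le_mul_of_nonneg_right (ENNReal.toReal_le_of_le_ofReal (by positivity) hvol)
      (integral_nonneg fun x => sq_nonneg (f x))
  calc ∑ p ∈ Finset.Icc 1 P, (∫ x in fanStrip RE R δ (sCen δ P p) β ∩ unitDisk, |f x|) ^ 2
      ≤ 8 * δ * ∑ p ∈ Finset.Icc 1 P,
          ∫ x in fanStrip RE R δ (sCen δ P p) β ∩ unitDisk, f x ^ 2 := by
        rw [Finset.mul_sum]; exact Finset.sum_le_sum hstrip
    _ ≤ 8 * δ * ((2 * (RE + 1) / e + 1) * ∫ x in unitDisk, f x ^ 2) := by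
        gcongr
        exact sum_setIntegral_inter_le (g := fun x => f x ^ 2) _
          (fun p => measurableSet_fanStrip _ _ _ _ _) measurableSet_unitDisk
          (fun x => sq_nonneg (f x)) hf.integrable_sq
          fun x hx => sum_indicator_fanStrip_le he hRE hδ P β hx
    _ = 8 * δ * (2 * (RE + 1) / e + 1) * ∫ x in unitDisk, f x ^ 2 := by ring

/-- The detector integral of `G_{δ_ξ}` for the detector centred at `s`, written exactly as it
appears in `GFanS` and `GFanSA`. -/
def fanBin (RE R δ s : ℝ) (f : ℝ × ℝ → ℝ) (β : ℝ) : ℝ :=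
  ∫ x in unitDisk, hatw δ (fanProj RE R x β - s) * f x / (dot2 x (dirp β) + RE)

lemma fanBin_eq_integral_fanKernel_mul (RE R δ s : ℝ) (f : ℝ × ℝ → ℝ) (β : ℝ) :
    fanBin RE R δ s f β = ∫ x in unitDisk, fanKernel RE R δ s β x * f x := by
  simp only [fanBin, fanKernel, mul_div_right_comm]

lemma fanBin_add_int_mul_two_pi (RE R δ s : ℝ) (f : ℝ × ℝ → ℝ) (β : ℝ) (k : ℤ) :
    fanBin RE R δ s f (β + k * (2 * π)) = fanBin RE R δ s f β := by
  simp only [fanBin, fanProj, dirv_add_int_mul_two_pi, dirp_add_int_mul_two_pi]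

lemma integrableOn_fanKernel_mul {RE R δ : ℝ} (hRE : 1 < RE) (hδ : 0 ≤ δ) (s β : ℝ)
    {f : ℝ × ℝ → ℝ} (hf : IntegrableOn f unitDisk) :
    IntegrableOn (fun x => fanKernel RE R δ s β x * f x) unitDisk :=
  hf.bdd_mul (measurable_fanKernel RE R δ s β).aestronglyMeasurable
    (ae_restrict_of_forall_mem measurableSet_unitDisk fun x hx => by
      rw [Real.norm_eq_abs]; exact abs_fanKernel_le hRE hδ s β hx)

lemma abs_fanBin_sub_le {RE R δ s K : ℝ} (hRE : 1 < RE) (hδ : 0 ≤ δ) {f : ℝ × ℝ → ℝ}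
    (hf : IntegrableOn f unitDisk)
    (hK : ∀ x ∈ unitDisk, ∀ a b,
      |fanKernel RE R δ s a x - fanKernel RE R δ s b x| ≤ K * |a - b|) (a b : ℝ) :
    |fanBin RE R δ s f a - fanBin RE R δ s f b|
      ≤ K * |a - b| * ((∫ x in fanStrip RE R δ s a ∩ unitDisk, |f x|)
        + ∫ x in fanStrip RE R δ s b ∩ unitDisk, |f x|) := by
  set Sa := fanStrip RE R δ s a
  set Sb := fanStrip RE R δ s b
  have hK0 : 0 ≤ K * |a - b| :=
    (abs_nonneg _).trans (hK 0 (by simp [unitDisk]) a b)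
  have hpt : ∀ x ∈ unitDisk, |fanKernel RE R δ s a x * f x - fanKernel RE R δ s b x * f x|
      ≤ K * |a - b| * (Sa.indicator (fun x => |f x|) x + Sb.indicator (fun x => |f x|) x) := by
    intro x hx
    have hind : 0 ≤ Sa.indicator (fun x => |f x|) x + Sb.indicator (fun x => |f x|) x :=
      add_nonneg (indicator_nonneg (fun _ _ => abs_nonneg _) x)
        (indicator_nonneg (fun _ _ => abs_nonneg _) x)
    rw [← sub_mul, abs_mul]
    by_cases h : x ∈ Sa ∨ x ∈ Sb
    · have hf' : |f x| ≤ Sa.indicator (fun x => |f x|) x + Sb.indicator (fun x => |f x|) x := by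
        rcases h with h | h <;>
        simp [indicator_of_mem h, indicator_nonneg (fun _ _ => abs_nonneg (f _)) x]
      exact (mul_le_mul_of_nonneg_right (hK x hx a b) (abs_nonneg _)).trans
        (mul_le_mul_of_nonneg_left hf' hK0)
    · have hzero : ∀ c, x ∉ fanStrip RE R δ s c → fanKernel RE R δ s c x = 0 := fun c hc =>
        by_contra fun h' => hc (mem_fanStrip_of_fanKernel_ne_zero hRE hx h')
      rw [hzero a (fun h' => h (Or.inl h')), hzero b (fun h' => h (Or.inr h')), sub_self,
        abs_zero, zero_mul]
      exact mul_nonneg hK0 hind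
  have hfa := hf.abs.indicator (measurableSet_fanStrip RE R δ s a)
  have hfb := hf.abs.indicator (measurableSet_fanStrip RE R δ s b)
  rw [fanBin_eq_integral_fanKernel_mul, fanBin_eq_integral_fanKernel_mul,
    ← integral_sub (integrableOn_fanKernel_mul hRE hδ s a hf)
      (integrableOn_fanKernel_mul hRE hδ s b hf), ← Real.norm_eq_abs]
  refine (norm_integral_le_of_norm_le ((hfa.add hfb).const_mul _)
    (ae_restrict_of_forall_mem measurableSet_unitDisk hpt)).trans_eq ?_
  rw [integral_const_mul, integral_add' hfa hfb,
    setIntegral_indicator (measurableSet_fanStrip RE R δ s a),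
    setIntegral_indicator (measurableSet_fanStrip RE R δ s b), inter_comm, inter_comm unitDisk]

lemma sum_sq_fanBin_sub_le {RE R e δ K : ℝ} (he : 0 < e) (hRE : 1 + e ≤ RE)
    (hR : RE + 1 ≤ R) (hδ : 0 < δ) (P : ℕ) {f : ℝ × ℝ → ℝ}
    (hf : MemLp f 2 (volume.restrict unitDisk))
    (hK : ∀ s, ∀ x ∈ unitDisk, ∀ a b,
      |fanKernel RE R δ s a x - fanKernel RE R δ s b x| ≤ K * |a - b|) (a b : ℝ) :
    ∑ p ∈ Finset.Icc 1 P, (fanBin RE R δ (sCen δ P p) f a - fanBin RE R δ (sCen δ P p) f b) ^ 2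
      ≤ 32 * δ * (2 * (RE + 1) / e + 1) * K ^ 2 * (a - b) ^ 2 * ∫ x in unitDisk, f x ^ 2 := by
  set u := fun β (p : ℕ) => ∫ x in fanStrip RE R δ (sCen δ P p) β ∩ unitDisk, |f x|
  set F := ∫ x in unitDisk, f x ^ 2
  have hbin : ∀ p ∈ Finset.Icc 1 P,
      (fanBin RE R δ (sCen δ P p) f a - fanBin RE R δ (sCen δ P p) f b) ^ 2
        ≤ 2 * (K * |a - b|) ^ 2 * (u a p ^ 2 + u b p ^ 2) := by
    intro p _
    have h := abs_fanBin_sub_le (by linarith) hδ.le (hf.integrable one_le_two)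
      (hK (sCen δ P p)) a b
    calc (fanBin RE R δ (sCen δ P p) f a - fanBin RE R δ (sCen δ P p) f b) ^ 2
        ≤ (K * |a - b| * (u a p + u b p)) ^ 2 := by
          rw [← sq_abs]; exact pow_le_pow_left₀ (abs_nonneg _) h 2
      _ ≤ 2 * (K * |a - b|) ^ 2 * (u a p ^ 2 + u b p ^ 2) := by
          nlinarith [mul_nonneg (sq_nonneg (K * |a - b|)) (sq_nonneg (u a p - u b p))]
  calc ∑ p ∈ Finset.Icc 1 P,
        (fanBin RE R δ (sCen δ P p) f a - fanBin RE R δ (sCen δ P p) f b) ^ 2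
      ≤ 2 * (K * |a - b|) ^ 2 * (∑ p ∈ Finset.Icc 1 P, u a p ^ 2
          + ∑ p ∈ Finset.Icc 1 P, u b p ^ 2) := by
        rw [← Finset.sum_add_distrib, Finset.mul_sum]; exact Finset.sum_le_sum hbin
    _ ≤ 2 * (K * |a - b|) ^ 2 * (8 * δ * (2 * (RE + 1) / e + 1) * F
          + 8 * δ * (2 * (RE + 1) / e + 1) * F) := by
        gcongr
        exacts [sum_sq_setIntegral_fanStrip_le he hRE hR hδ P a hf,
          sum_sq_setIntegral_fanStrip_le he hRE hR hδ P b hf]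
    _ = 32 * δ * (2 * (RE + 1) / e + 1) * K ^ 2 * (a - b) ^ 2 * F := by
        rw [mul_pow, sq_abs]; ring

def angMid (αs : ℕ → ℝ) (n : ℕ) : ℝ := (αs n + αs (n + 1)) / 2

lemma angCell_succ (αs : ℕ → ℝ) (n : ℕ) :
    angCell αs (n + 1)
      = {φ : ℝ | ∃ k : ℤ, φ + 2 * π * (k : ℝ) ∈ Ico (angMid αs n) (angMid αs (n + 1))} :=
  rfl

namespace AngGrid

variable {Q : ℕ} {αs : ℕ → ℝ}

lemma le_succ (hg : AngGrid Q αs) {n : ℕ} (hn : n ≤ Q) : αs n ≤ αs (n + 1) := by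
  have h₁ := hg.mem 1 le_rfl hg.one_le
  have hQ := hg.mem Q hg.one_le le_rfl
  rcases Nat.eq_zero_or_pos n with rfl | hn0
  · rw [hg.wrap0]; linarith [h₁.1, hQ.2, Real.pi_pos]
  rcases hn.lt_or_eq with hnQ | rfl
  · exact (hg.mono n hn0 hnQ).le
  · rw [hg.wrapQ]; linarith [h₁.1, hQ.2, Real.pi_pos]

lemma succ_sub_le (hg : AngGrid Q αs) {δ : ℝ} (hgap : GapLe Q αs δ) {n : ℕ} (hn : n ≤ Q) :
    αs (n + 1) - αs n ≤ δ := by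
  rcases Nat.eq_zero_or_pos n with rfl | hn0
  · have := hgap Q hg.one_le le_rfl
    rw [hg.wrapQ] at this
    rw [hg.wrap0]; linarith
  · exact hgap n hn0 hn

lemma angMid_monotoneOn (hg : AngGrid Q αs) : MonotoneOn (angMid αs) (Iic Q) := by
  refine monotoneOn_of_le_succ ordConnected_Iic fun n _ _ hn => ?_
  rw [Order.succ_eq_add_one] at hn ⊢
  have h₁ := hg.le_succ (Nat.le_of_succ_le (mem_Iic.1 hn))
  have h₂ := hg.le_succ (mem_Iic.1 hn)
  simp only [angMid]; linarith

lemma angMid_eq_add_two_pi (hg : AngGrid Q αs) : angMid αs Q = angMid αs 0 + 2 * π := by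
  simp only [angMid, zero_add, hg.wrapQ, hg.wrap0]; ring

lemma exists_mem_angCell (hg : AngGrid Q αs) {δ : ℝ} (hgap : GapLe Q αs δ) (α : ℝ) :
    ∃ q ∈ Finset.Icc 1 Q, α ∈ angCell αs q
      ∧ (∀ q' ∈ Finset.Icc 1 Q, α ∈ angCell αs q' → q' = q)
      ∧ ∃ k : ℤ, |αs q - (α + k * (2 * π))| ≤ δ / 2 := by
  -- Shift `α` by a multiple of `2π` into `[angMid 0, angMid Q)`, which the midpoints partition.
  obtain ⟨k, hk, hkuniq⟩ := existsUnique_add_zsmul_mem_Ico Real.two_pi_pos α (angMid αs 0)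
  rw [← hg.angMid_eq_add_two_pi, zsmul_eq_mul] at hk
  obtain ⟨n, ⟨hnQ, hn⟩, hnuniq⟩ := existsUnique_mem_Ico_of_monotoneOn hg.angMid_monotoneOn hk
  refine ⟨n + 1, Finset.mem_Icc.2 ⟨Nat.le_add_left 1 n, hnQ⟩,
    by rw [angCell_succ]; exact ⟨k, by rwa [mul_comm]⟩, fun q' hq' hα' => ?_, k, ?_⟩
  · obtain ⟨n', rfl⟩ := Nat.exists_eq_add_of_le' (Finset.mem_Icc.1 hq').1
    have hn'Q : n' < Q := Finset.mem_Icc.1 hq' |>.2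
    rw [angCell_succ] at hα'
    obtain ⟨k', hk'⟩ := hα'
    rw [mul_comm] at hk'
    have hk'mem : α + k' • (2 * π) ∈ Ico (angMid αs 0) (angMid αs 0 + 2 * π) := by
      rw [zsmul_eq_mul, ← hg.angMid_eq_add_two_pi]
      exact ⟨(hg.angMid_monotoneOn (mem_Iic.2 (Nat.zero_le _)) (mem_Iic.2 hn'Q.le)
          (Nat.zero_le _)).trans hk'.1,
        hk'.2.trans_le (hg.angMid_monotoneOn (mem_Iic.2 hn'Q) (mem_Iic.2 le_rfl) hn'Q)⟩
    rw [hkuniq k' hk'mem] at hk'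
    rw [hnuniq n' ⟨hn'Q, hk'⟩]
  · have h₁ := hg.succ_sub_le hgap hnQ.le
    have h₂ := hg.succ_sub_le hgap hnQ
    simp only [angMid] at hn
    rw [abs_le]; constructor <;> linarith [hn.1, hn.2]

end AngGrid

lemma pairwise_disjoint_sCell {δ : ℝ} (hδ : 0 ≤ δ) (P : ℕ) :
    Pairwise (Disjoint on sCell δ P) := by
  have hmono : Monotone fun n : ℕ => sCen δ P n - δ / 2 := fun m n hmn => by
    have : (m : ℝ) ≤ n := Nat.cast_le.2 hmn
    simp only [sCen]; gcongr
  convert hmono.pairwise_disjoint_on_Ico_succ using 3 with n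
  simp only [sCell, sCen, Order.succ_eq_add_one, Nat.cast_add, Nat.cast_one]
  congr 1
  ring

lemma integral_sq_detectorSum_le {δ : ℝ} (hδ : 0 < δ) (P : ℕ) (b : ℕ → ℝ) (I : Set ℝ) :
    ∫ ξ in I, ((δ ^ 2)⁻¹ * ∑ p ∈ Finset.Icc 1 P,
        (sCell δ P p).indicator (fun _ => (1 : ℝ)) ξ * b p) ^ 2
      ≤ (δ ^ 3)⁻¹ * ∑ p ∈ Finset.Icc 1 P, b p ^ 2 := by
  have hint : ∀ p ∈ Finset.Icc 1 P, Integrable ((sCell δ P p).indicator fun _ => b p ^ 2) :=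
    fun p _ => (integrableOn_const measure_Ico_lt_top.ne).integrable_indicator measurableSet_Ico
  have hvol : ∀ p, volume.real (sCell δ P p) = δ := fun p => by
    rw [sCell, Real.volume_real_Ico_of_le (by linarith)]; ring
  simp_rw [mul_pow, sq_sum_indicator_mul_eq (pairwise_disjoint_sCell hδ.le P)]
  calc ∫ ξ in I, ((δ ^ 2)⁻¹) ^ 2 * ∑ p ∈ Finset.Icc 1 P, (sCell δ P p).indicator
        (fun _ => b p ^ 2) ξ
      ≤ ∫ ξ, ((δ ^ 2)⁻¹) ^ 2 * ∑ p ∈ Finset.Icc 1 P, (sCell δ P p).indicator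
        (fun _ => b p ^ 2) ξ :=
        setIntegral_le_integral ((integrable_finsetSum _ hint).const_mul _)
          (ae_of_all _ fun ξ => mul_nonneg (sq_nonneg _) (Finset.sum_nonneg fun p _ =>
            indicator_nonneg (fun _ _ => sq_nonneg _) ξ))
    _ = (δ ^ 3)⁻¹ * ∑ p ∈ Finset.Icc 1 P, b p ^ 2 := by
        rw [integral_const_mul, integral_finsetSum _ hint]
        have hp : ∀ p, ∫ ξ, (sCell δ P p).indicator (fun _ => b p ^ 2) ξ = δ * b p ^ 2 :=
          fun p => by
            rw [integral_indicator_const (s := sCell δ P p) _ measurableSet_Ico, hvol,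
              smul_eq_mul]
        simp only [hp, ← Finset.mul_sum]
        field_simp

lemma GFanSA_sub_GFanS_eq {RE R : ℝ} {P Q : ℕ} {αs : ℕ → ℝ} {f : ℝ × ℝ → ℝ} {α : ℝ} {q : ℕ}
    (hq : q ∈ Finset.Icc 1 Q) (hα : α ∈ angCell αs q)
    (huniq : ∀ q' ∈ Finset.Icc 1 Q, α ∈ angCell αs q' → q' = q) (ξ : ℝ) :
    GFanSA RE R P Q αs f ξ α - GFanS RE R P f ξ α
      = ((Wfan RE R / P) ^ 2)⁻¹ * ∑ p ∈ Finset.Icc 1 P,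
          (sCell (Wfan RE R / P) P p).indicator (fun _ => (1 : ℝ)) ξ *
            (fanBin RE R (Wfan RE R / P) (sCen (Wfan RE R / P) P p) f (αs q)
              - fanBin RE R (Wfan RE R / P) (sCen (Wfan RE R / P) P p) f α) := by
  simp only [GFanSA, GFanS, fanBin, ← mul_sub, ← Finset.sum_sub_distrib]
  congr 1
  refine Finset.sum_congr rfl fun p _ => ?_
  rw [Finset.sum_eq_single_of_mem q hq fun q' hq' hne => by
    rw [indicator_of_notMem fun h => hne (huniq q' hq' h)]; ring]
  rw [indicator_of_mem hα]
  ring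

lemma nSinoW_le_sqrt {RE R B : ℝ} {g : ℝ → ℝ → ℝ}
    (h : ∀ α, ∫ ξ in Ioo (-(Wfan RE R) / 2) (Wfan RE R / 2), g ξ α ^ 2 ≤ B) :
    nSinoW RE R g ≤ Real.sqrt (2 * π * B) := by
  rw [nSinoW, ← Real.sqrt_eq_rpow]
  refine Real.sqrt_le_sqrt ((integral_mono_of_nonneg
    (ae_of_all _ fun α => integral_nonneg fun ξ => sq_nonneg (g ξ α))
    (integrableOn_const (s := Ioc (-π) π) (C := B) measure_Ioc_lt_top.ne)
    (ae_of_all _ h)).trans_eq ?_)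
  rw [setIntegral_const, Real.volume_real_Ioc_of_le (by linarith [Real.pi_pos]), smul_eq_mul]
  ring

lemma integral_sq_GFanSA_sub_GFanS_le {RE R e K : ℝ} {P Q : ℕ} {αs : ℕ → ℝ} {δα : ℝ}
    (he : 0 < e) (hRE : 1 + e ≤ RE) (hR : RE + 1 ≤ R) (hP : 1 ≤ P) (hg : AngGrid Q αs)
    (hgap : GapLe Q αs δα) {f : ℝ × ℝ → ℝ} (hf : MemLp f 2 (volume.restrict unitDisk))
    (hK : ∀ s, ∀ x ∈ unitDisk, ∀ a b, |fanKernel RE R (Wfan RE R / P) s a x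
      - fanKernel RE R (Wfan RE R / P) s b x| ≤ K * |a - b|) (α : ℝ) :
    ∫ ξ in Ioo (-(Wfan RE R) / 2) (Wfan RE R / 2),
        (GFanSA RE R P Q αs f ξ α - GFanS RE R P f ξ α) ^ 2
      ≤ 8 * (2 * (RE + 1) / e + 1) * K ^ 2 * (δα / (Wfan RE R / P)) ^ 2
          * ∫ x in unitDisk, f x ^ 2 := by
  set δ := Wfan RE R / P
  have hδ : 0 < δ :=
    div_pos (Wfan_pos (by linarith) (by linarith)) (Nat.cast_pos.2 hP)
  obtain ⟨q, hq, hαq, huniq, k, hk⟩ := hg.exists_mem_angCell hgap α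
  have hbins := sum_sq_fanBin_sub_le he hRE hR hδ P hf hK (αs q) (α + k * (2 * π))
  simp only [fanBin_add_int_mul_two_pi] at hbins
  have hΔ : (αs q - (α + k * (2 * π))) ^ 2 ≤ (δα / 2) ^ 2 := by
    rw [← sq_abs]; exact pow_le_pow_left₀ (abs_nonneg _) hk 2
  simp_rw [GFanSA_sub_GFanS_eq hq hαq huniq]
  refine (integral_sq_detectorSum_le hδ P _ _).trans ?_
  have hKov : 0 ≤ 2 * (RE + 1) / e + 1 := by
    have : 0 ≤ 2 * (RE + 1) / e := div_nonneg (by linarith) he.le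
    linarith
  have hF : 0 ≤ ∫ x in unitDisk, f x ^ 2 := integral_nonneg fun x => sq_nonneg (f x)
  calc (δ ^ 3)⁻¹ * ∑ p ∈ Finset.Icc 1 P,
        (fanBin RE R δ (sCen δ P p) f (αs q) - fanBin RE R δ (sCen δ P p) f α) ^ 2
      ≤ (δ ^ 3)⁻¹ * (32 * δ * (2 * (RE + 1) / e + 1) * K ^ 2 * (δα / 2) ^ 2
          * ∫ x in unitDisk, f x ^ 2) := by
        gcongr
        refine hbins.trans ?_
        gcongr
    _ = 8 * (2 * (RE + 1) / e + 1) * K ^ 2 * (δα / δ) ^ 2 * ∫ x in unitDisk, f x ^ 2 := by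
        field_simp
        ring

lemma abs_fanKernel_sub_le_of_le {RE R e δ Rm : ℝ} (he : 0 < e) (hRE : 1 + e ≤ RE)
    (hR : RE + 1 ≤ R) (hRm : R + 1 ≤ Rm) (hδ : 0 ≤ δ) (hδ1 : δ ≤ 1) (s : ℝ) {x : ℝ × ℝ}
    (hx : x ∈ unitDisk) (a b : ℝ) :
    |fanKernel RE R δ s a x - fanKernel RE R δ s b x|
      ≤ (Rm * (2 * Rm * Rm / e ^ 2) + 2) / e ^ 2 * |a - b| := by
  refine (abs_fanKernel_sub_le he hRE (by linarith) hδ s hx a b).trans ?_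
  have : 0 ≤ 2 * R * (RE + 2) / e ^ 2 := div_nonneg (by nlinarith) (sq_nonneg e)
  gcongr <;> linarith

/-- for `0 < δ_ξ ≤ 1`, `‖G_{δ_ξ,δ_α} − G_{δ_ξ}‖ ≤ c δ_α/δ_ξ`, with `c`
independent of `δ_ξ`, `δ_α`, and bounded for `R` bounded, `R_E` bounded away from `1`. -/
theorem gfan_angular_discretization :
    ∀ ε Rmax : ℝ, 0 < ε →
      ∃ c : ℝ, 0 < c ∧ ∀ RE R : ℝ, 1 + ε ≤ RE → RE + 1 < R → R ≤ Rmax →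
        ∀ P : ℕ, 1 ≤ P → Wfan RE R / P ≤ 1 →
        ∀ (Q : ℕ) (αs : ℕ → ℝ) (δα : ℝ), AngGrid Q αs → 0 < δα → GapLe Q αs δα →
        ∀ f : ℝ × ℝ → ℝ, SuppDisk f → L2Img f →
          nSinoW RE R (fun ξ α => GFanSA RE R P Q αs f ξ α - GFanS RE R P f ξ α) ≤
            c * (δα / (Wfan RE R / P)) * nImg f := by
  intro ε Rmax hε
  set Rm := |Rmax| + 1
  -- `8 · (overlap count of the slabs) · (angular Lipschitz constant of the kernel)²`.
  set C := 8 * (2 * Rm / ε + 1) * ((Rm * (2 * Rm * Rm / ε ^ 2) + 2) / ε ^ 2) ^ 2 with hCdef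
  refine ⟨Real.sqrt (2 * π * C), by positivity, ?_⟩
  intro RE R hRE hRER hRRm P hP hδ1 Q αs δα hg hδα hgap f _ hf
  set δ := Wfan RE R / P
  have hδ : 0 < δ := div_pos (Wfan_pos (by linarith) (by linarith)) (Nat.cast_pos.2 hP)
  have hRm : R + 1 ≤ Rm := by linarith [le_abs_self Rmax]
  have hB : ∀ α, ∫ ξ in Ioo (-(Wfan RE R) / 2) (Wfan RE R / 2),
      (GFanSA RE R P Q αs f ξ α - GFanS RE R P f ξ α) ^ 2 ≤ C * (δα / δ) ^ 2 * ∫ x, f x ^ 2 :=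
    fun α => (integral_sq_GFanSA_sub_GFanS_le hε hRE hRER.le hP hg hgap (hf.restrict unitDisk)
      (fun s x hx => abs_fanKernel_sub_le_of_le hε hRE hRER.le hRm hδ.le hδ1 s hx) α).trans <| by
        have : 0 ≤ ∫ x in unitDisk, f x ^ 2 := integral_nonneg fun x => sq_nonneg (f x)
        have hF : ∫ x in unitDisk, f x ^ 2 ≤ ∫ x, f x ^ 2 :=
          setIntegral_le_integral hf.integrable_sq (ae_of_all _ fun x => sq_nonneg (f x))
        rw [hCdef]; gcongr; linarith
  calc nSinoW RE R (fun ξ α => GFanSA RE R P Q αs f ξ α - GFanS RE R P f ξ α)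
      ≤ Real.sqrt (2 * π * (C * (δα / δ) ^ 2 * ∫ x, f x ^ 2)) := nSinoW_le_sqrt hB
    _ = Real.sqrt (2 * π * C) * (δα / δ) * nImg f := by
        rw [nImg, ← Real.sqrt_eq_rpow, ← mul_assoc, ← mul_assoc, Real.sqrt_mul (by positivity),
          Real.sqrt_mul (by positivity), Real.sqrt_sq (by positivity)]

end
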